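/- In the Fibonacci word F (fixed point of σ(a)=ab, σ(b)=a beginning with a), the number of occurrences of the letter a in the prefix F[1,p−1] equals ⌊φp⌋, where φ = (√5 − 1)/2. -/

import Mathlib

/-- The Fibonacci substitution `σ(a) = ab`, `σ(b) = a`, with `a = 0`, `b = 1`. -/
def fibSub : Fin 2 → List (Fin 2) := fun x => if x = 0 then [0, 1] else [0]

/-- Iterates `σ^m(a)`. -/
def fibList : ℕ → List (Fin 2)
  | 0 => [0]
  | n + 1 => (fibList n).flatMap fibSub

/-- The infinite Fibonacci word, the fixed point of `σ` beginning with `a = 0`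
(0-indexed: `fibWord i` is the `(i+1)`-st letter). -/
def fibWord (i : ℕ) : Fin 2 := (fibList (i + 1)).getD i 0

/-- The prefix `F[1,n]` of the Fibonacci word, of length `n`. -/
def fibPrefix (n : ℕ) : List (Fin 2) := (List.range n).map fibWord

noncomputable def phi : ℝ := (Real.sqrt 5 - 1) / 2

/-!
Since `F_{m+1} φ = F_m - (-φ)^{m+1}`, and `k φ` stays at distance at least `φ^m` from every
integer when `0 < k < F_{m+1}` (the Fibonacci convergents are best approximations of `φ`),
we get `⌊φ (F_{m+1} + k)⌋ = F_m + ⌊φ k⌋`. This is the recursion that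
`σ^{m+2}(a) = σ^{m+1}(a) σ^m(a)` imposes on the number of `a`s in a prefix, so by induction on
`m` every prefix of `σ^m(a)` of length `i` contains `⌊φ (i + 1)⌋` letters `a`.
-/

open scoped goldenRatio

lemma phi_eq_neg_goldenConj : phi = -ψ := by
  rw [phi, Real.goldenConj]; ring

lemma phi_pos : 0 < phi := by
  rw [phi_eq_neg_goldenConj]; linarith [Real.goldenConj_neg]

lemma phi_lt_one : phi < 1 := by
  rw [phi_eq_neg_goldenConj]; linarith [Real.neg_one_lt_goldenConj]

lemma phi_sq : phi ^ 2 = 1 - phi := by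
  rw [phi_eq_neg_goldenConj, neg_sq, Real.goldenConj_sq]; ring

lemma phi_sq_le_half : phi ^ 2 ≤ 1 / 2 := by
  have : (2 : ℝ) ≤ √5 := Real.le_sqrt_of_sq_le (by norm_num)
  rw [phi_sq, phi]; linarith

lemma abs_neg_phi_pow (n : ℕ) : |(-phi) ^ n| = phi ^ n := by
  rw [abs_pow, abs_neg, abs_of_pos phi_pos]

lemma phi_mul_fib_succ (n : ℕ) : phi * Nat.fib (n + 1) = Nat.fib n - (-phi) ^ (n + 1) := by
  rw [phi_eq_neg_goldenConj, neg_neg, ← Real.goldenConj_mul_fib_succ_add_fib]; ring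

lemma floor_phi : ⌊phi⌋ = 0 :=
  Int.floor_eq_zero_iff.2 ⟨phi_pos.le, phi_lt_one⟩

lemma floor_phi_mul_two : ⌊phi * 2⌋ = 1 := by
  rw [Int.floor_eq_iff]; push_cast
  constructor <;> linarith [phi_sq_le_half, phi_sq, phi_lt_one]

lemma abs_le_abs_sub_intCast {R : Type*} [Field R] [LinearOrder R] [IsStrictOrderedRing R]
    {x : R} (hx : |x| ≤ 1 / 2) (w : ℤ) : |x| ≤ |x - w| := by
  rcases eq_or_ne w 0 with rfl | hw
  · simp
  · have h₁ : (1 : R) ≤ |(w : R)| := by exact_mod_cast Int.one_le_abs hw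
    have h₂ := abs_sub_abs_le_abs_sub (w : R) x
    rw [abs_sub_comm (w : R)] at h₂
    linarith

lemma floor_add_eq_floor_of_abs_lt {R : Type*} [Field R] [LinearOrder R] [IsStrictOrderedRing R]
    [FloorRing R] {x ε : R} (h : ∀ z : ℤ, |ε| < |x - z|) : ⌊x + ε⌋ = ⌊x⌋ := by
  have h₀ := h ⌊x⌋
  have h₁ := h (⌊x⌋ + 1)
  rw [abs_of_nonneg (sub_nonneg.2 (Int.floor_le x))] at h₀
  rw [abs_sub_comm, Int.cast_add, Int.cast_one,
    abs_of_pos (sub_pos.2 (Int.lt_floor_add_one x))] at h₁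
  rw [Int.floor_eq_iff]
  constructor <;> linarith [neg_abs_le ε, le_abs_self ε]

/-- Split `k = F_{n+2} + j`, so that `φ k - z = φ j - w - (-φ)^{n+2}`: for `j > 0` the
induction hypothesis for `j` loses at most `φ^{n+2} ≤ φ^n / 2`; for `j = 0` use
`φ^{n+2} ≤ 1/2`. -/
lemma phi_pow_le_abs_phi_mul_sub (n : ℕ) {k : ℕ} (hk₀ : 0 < k) (hk : k < Nat.fib (n + 1))
    (z : ℤ) : phi ^ n ≤ |phi * k - z| := by
  induction n using Nat.twoStepInduction generalizing k z with
  | zero => simp at hk; omega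
  | one => simp at hk; omega
  | more n ih₀ ih₁ =>
    rcases lt_or_ge k (Nat.fib (n + 2)) with hk' | hk'
    · exact (pow_le_pow_of_le_one phi_pos.le phi_lt_one.le (by omega)).trans (ih₁ hk₀ hk' z)
    obtain ⟨j, rfl⟩ := Nat.exists_eq_add_of_le hk'
    have hj : j < Nat.fib (n + 1) := by
      have : Nat.fib (n + 2 + 1) = Nat.fib (n + 1) + Nat.fib (n + 2) := Nat.fib_add_two
      omega
    have hsplit : phi * ↑(Nat.fib (n + 2) + j) - z
        = (phi * j - ↑(z - Nat.fib (n + 1) : ℤ)) - (-phi) ^ (n + 2) := by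
      push_cast; linear_combination phi_mul_fib_succ (n + 1)
    have hsmall : phi ^ (n + 2) ≤ phi ^ n / 2 := by
      rw [pow_add]; nlinarith [phi_sq_le_half, pow_pos phi_pos n]
    rw [hsplit]
    rcases Nat.eq_zero_or_pos j with rfl | hj₀
    · have hle : phi ^ (n + 2) ≤ phi ^ 2 :=
        pow_le_pow_of_le_one phi_pos.le phi_lt_one.le (by omega)
      have := abs_le_abs_sub_intCast (x := (-phi) ^ (n + 2))
        (by rw [abs_neg_phi_pow]; linarith [phi_sq_le_half]) (Nat.fib (n + 1) - z)
      rw [abs_neg_phi_pow] at this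
      exact this.trans_eq (by rw [abs_sub_comm]; push_cast; ring_nf)
    · calc phi ^ (n + 2) ≤ phi ^ n - phi ^ (n + 2) := by linarith
        _ ≤ |phi * j - ↑(z - Nat.fib (n + 1) : ℤ)| - |(-phi) ^ (n + 2)| := by
          rw [abs_neg_phi_pow]; linarith [ih₀ hj₀ hj (z - Nat.fib (n + 1))]
        _ ≤ _ := abs_sub_abs_le_abs_sub _ _

lemma floor_phi_mul_fib_add (m : ℕ) {k : ℕ} (hk₀ : 0 < k) (hk : k < Nat.fib (m + 1)) :
    ⌊phi * ↑(Nat.fib (m + 1) + k)⌋ = Nat.fib m + ⌊phi * k⌋ := by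
  have h : phi * ↑(Nat.fib (m + 1) + k)
      = ((Nat.fib m : ℤ) : ℝ) + (phi * k + -(-phi) ^ (m + 1)) := by
    push_cast; linear_combination phi_mul_fib_succ m
  rw [h, Int.floor_intCast_add, floor_add_eq_floor_of_abs_lt]
  intro z
  rw [abs_neg, abs_neg_phi_pow]
  exact (pow_lt_pow_right_of_lt_one₀ phi_pos phi_lt_one (Nat.lt_succ_self m)).trans_le
    (phi_pow_le_abs_phi_mul_sub m hk₀ hk z)

lemma fibList_add_two (n : ℕ) : fibList (n + 2) = fibList (n + 1) ++ fibList n := by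
  induction n with
  | zero => rfl
  | succ n ih =>
    show (fibList (n + 2)).flatMap fibSub = fibList (n + 2) ++ fibList (n + 1)
    conv_lhs => rw [ih]
    rw [List.flatMap_append]; rfl

lemma length_fibList (n : ℕ) : (fibList n).length = Nat.fib (n + 2) := by
  induction n using Nat.twoStepInduction with
  | zero => rfl
  | one => rfl
  | more n ih₀ ih₁ =>
    rw [fibList_add_two, List.length_append, ih₀, ih₁, Nat.fib_add_two (n := n + 2)]; ring

lemma count_zero_fibList (n : ℕ) : (fibList n).count 0 = Nat.fib (n + 1) := by
  induction n using Nat.twoStepInduction with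
  | zero => rfl
  | one => rfl
  | more n ih₀ ih₁ =>
    rw [fibList_add_two, List.count_append, ih₀, ih₁, Nat.fib_add_two (n := n + 1)]; ring

lemma fibList_prefix_fibList_succ (n : ℕ) : fibList n <+: fibList (n + 1) := by
  cases n with
  | zero => exact ⟨[1], rfl⟩
  | succ n => rw [fibList_add_two]; exact List.prefix_append _ _

lemma fibList_prefix_of_le {m n : ℕ} (h : m ≤ n) : fibList m <+: fibList n := by
  induction h with
  | refl => exact List.prefix_refl _
  | step _ ih => exact ih.trans (fibList_prefix_fibList_succ _)

lemma lt_fib_add_two (n : ℕ) : n < Nat.fib (n + 2) := by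
  have := Nat.le_fib_add_one (n + 2); omega

lemma fibPrefix_eq_take (n : ℕ) : fibPrefix n = (fibList n).take n := by
  have hlen : n ≤ (fibList n).length := by rw [length_fibList]; exact (lt_fib_add_two n).le
  apply List.ext_getElem
  · simp [fibPrefix, hlen]
  · intro i h₁ h₂
    have hi : i < (fibList (i + 1)).length := by
      rw [length_fibList]; exact (lt_fib_add_two i).trans (Nat.fib_lt_fib_succ (by omega))
    simp only [fibPrefix, List.getElem_map, List.getElem_range, List.getElem_take, fibWord,
      List.getD_eq_getElem _ _ hi]
    exact (fibList_prefix_of_le (by simp [fibPrefix] at h₁; omega)).getElem hi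

lemma count_zero_take_fibList (n : ℕ) {i : ℕ} (hi : i < Nat.fib (n + 2)) :
    (((fibList n).take i).count 0 : ℤ) = ⌊phi * ↑(i + 1)⌋ := by
  induction n using Nat.twoStepInduction generalizing i with
  | zero =>
    obtain rfl : i = 0 := by simpa using hi
    simp [floor_phi]
  | one =>
    obtain rfl | rfl : i = 0 ∨ i = 1 := by change i < 2 at hi; omega
    · simp [floor_phi]
    · simp [fibList, fibSub, floor_phi_mul_two]
  | more n ih₀ ih₁ =>
    have hfib : Nat.fib (n + 2 + 2) = Nat.fib (n + 2) + Nat.fib (n + 1 + 2) := Nat.fib_add_two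
    rw [fibList_add_two]
    rcases lt_or_ge i (Nat.fib (n + 1 + 2)) with hi' | hi'
    · rw [List.take_append_of_le_length (by rw [length_fibList]; omega), ih₁ hi']
    obtain ⟨j, rfl⟩ := Nat.exists_eq_add_of_le hi'
    have hj : j < Nat.fib (n + 2) := by omega
    have hshift := floor_phi_mul_fib_add (n + 2) (Nat.succ_pos j)
      ((Nat.succ_le_of_lt hj).trans_lt (Nat.fib_lt_fib_succ (by omega)))
    rw [List.take_append, List.take_of_length_le (by rw [length_fibList]; omega), length_fibList,
      Nat.add_sub_cancel_left, List.count_append, count_zero_fibList, Nat.cast_add, ih₀ hj]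
    exact hshift.symm

theorem count_a_in_prefix_general (p : ℕ) :
    ((fibPrefix (p - 1)).count 0 : ℤ) = ⌊phi * (p : ℝ)⌋ := by
  rcases p with _ | n
  · simp [fibPrefix]
  · rw [Nat.add_sub_cancel, fibPrefix_eq_take, count_zero_take_fibList n (lt_fib_add_two n)]

/-- The number of occurrences of `a = 0` in the prefix `F[1,p-1]` of the Fibonacci word
equals `⌊φ p⌋`. -/
theorem count_a_in_prefix (p : ℕ) (hp : 1 ≤ p) :
    ((fibPrefix (p - 1)).count 0 : ℤ) = ⌊phi * (p : ℝ)⌋ :=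
  count_a_in_prefix_general p
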